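/- Suppose w_{il} ≥ 0 for all i,l, w_{ii} = 0 for all i, and a_i > Σ_l w_{il} for every customer i. Then the consumption game has a unique Nash equilibrium, and it is given in closed form by q* = (A − W)^{-1}·(B − Φ), where A = diag(a_1,…,a_N), B = (b_1,…,b_N)ᵀ and Φ = (φ_1,…,φ_N)ᵀ. That is: q* is a Nash equilibrium, and any Nash equilibrium q equals q*. -/

import Mathlib

/-!
Customer `i`'s utility is a strictly concave quadratic in its own consumption `q i` (the
self-weight `w i i` vanishes), so `q` is a Nash equilibrium exactly when every customer plays
the first-order condition `a i * q i = b i - φ i + ∑ l, w i l * q l`, i.e. when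
`(A - W) q = B - Φ`. The hypothesis `∑ l, w i l < a i` makes `A - W` strictly diagonally
dominant, hence invertible, and the linear system has the unique solution `(A - W)⁻¹ (B - Φ)`.
-/

open Matrix Finset

theorem concave_quadratic_le_iff {a K q : ℝ} (ha : 0 < a) :
    (∀ r, -(1/2) * a * r ^ 2 + K * r ≤ -(1/2) * a * q ^ 2 + K * q) ↔ a * q = K := by
  have hgap : ∀ r, (-(1/2) * a * r ^ 2 + K * r) - (-(1/2) * a * q ^ 2 + K * q)
      = -(1/2) * a * (r - q) ^ 2 + (K - a * q) * (r - q) := fun r => by ring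
  constructor
  · intro hmax
    have h := hmax (q + (K - a * q) / a)
    rw [← sub_nonpos, hgap, add_sub_cancel_left] at h
    have hvalue : -(1/2) * a * ((K - a * q) / a) ^ 2 + (K - a * q) * ((K - a * q) / a)
        = (K - a * q) ^ 2 / (2 * a) := by field_simp; ring
    rw [hvalue, div_le_iff₀ (by positivity), zero_mul, sq_nonpos_iff, sub_eq_zero] at h
    exact h.symm
  · intro hfoc r
    rw [← sub_nonpos, hgap, hfoc, sub_self, zero_mul, add_zero]
    nlinarith [sq_nonneg (r - q)]

variable {ι : Type*} [Fintype ι] [DecidableEq ι]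

def IsNashEquilibrium (U : ι → (ι → ℝ) → ℝ) (q : ι → ℝ) : Prop :=
  ∀ i r, U i (Function.update q i r) ≤ U i q

noncomputable def consumptionUtility (a b φ : ι → ℝ) (w : ι → ι → ℝ) (i : ι) (q : ι → ℝ) : ℝ :=
  -(1/2) * a i * q i ^ 2 + b i * q i + q i * (∑ l, w i l * q l) - φ i * q i

theorem consumptionUtility_update {a b φ : ι → ℝ} {w : ι → ι → ℝ} {i : ι} (hii : w i i = 0)
    (q : ι → ℝ) (r : ℝ) :
    consumptionUtility a b φ w i (Function.update q i r)
      = -(1/2) * a i * r ^ 2 + (b i - φ i + ∑ l, w i l * q l) * r := by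
  have hsum : ∑ l, w i l * Function.update q i r l = ∑ l, w i l * q l := by
    refine sum_congr rfl fun l _ => ?_
    rcases eq_or_ne l i with rfl | hl
    · simp [hii]
    · rw [Function.update_of_ne hl]
  rw [consumptionUtility, hsum, Function.update_self]
  ring

theorem consumptionUtility_eq {a b φ : ι → ℝ} {w : ι → ι → ℝ} {i : ι} (hii : w i i = 0)
    (q : ι → ℝ) :
    consumptionUtility a b φ w i q
      = -(1/2) * a i * q i ^ 2 + (b i - φ i + ∑ l, w i l * q l) * q i := by
  simpa using consumptionUtility_update (a := a) (b := b) (φ := φ) hii q (q i)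

theorem isNashEquilibrium_consumptionUtility_iff {a b φ : ι → ℝ} {w : ι → ι → ℝ}
    (ha : ∀ i, 0 < a i) (hdiag : ∀ i, w i i = 0) (q : ι → ℝ) :
    IsNashEquilibrium (consumptionUtility a b φ w) q
      ↔ (diagonal a - of w) *ᵥ q = fun i => b i - φ i := by
  simp only [IsNashEquilibrium, consumptionUtility_update (hdiag _),
    consumptionUtility_eq (hdiag _), concave_quadratic_le_iff (ha _), funext_iff,
    sub_mulVec, Pi.sub_apply, mulVec_diagonal]
  refine forall_congr' fun i => ?_
  change _ ↔ a i * q i - ∑ l, w i l * q l = _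
  constructor <;> intro h <;> linarith

theorem det_diagonal_sub_ne_zero {a : ι → ℝ} {w : ι → ι → ℝ} (hw : ∀ i l, 0 ≤ w i l)
    (hdom : ∀ i, ∑ l, w i l < a i) :
    (diagonal a - of w).det ≠ 0 := by
  refine det_ne_zero_of_sum_row_lt_diag fun k => ?_
  have hoff : ∀ j ∈ univ.erase k, ‖(diagonal a - of w) k j‖ = w k j := fun j hj => by
    rw [Matrix.sub_apply, diagonal_apply_ne _ (ne_of_mem_erase hj).symm, of_apply, zero_sub,
      norm_neg, Real.norm_of_nonneg (hw k j)]
  rw [sum_congr rfl hoff, sum_erase_eq_sub (mem_univ k), Matrix.sub_apply, diagonal_apply_eq,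
    of_apply]
  exact (sub_lt_sub_right (hdom k) _).trans_le (le_abs_self _)

/-- If `w i l ≥ 0`, `w i i = 0` and `a i > ∑ l, w i l` for every `i`,
then the consumption game has a unique Nash equilibrium, given in closed form by
`q* = (A - W)⁻¹ ⬝ (B - Φ)`. -/
theorem statement3 (N : ℕ) (a b φ : Fin N → ℝ) (w : Fin N → Fin N → ℝ)
    (hw : ∀ i l, 0 ≤ w i l) (hdiag : ∀ i, w i i = 0)
    (hdom : ∀ i, ∑ l, w i l < a i) :
    (∀ (i : Fin N) (r : ℝ),
        (fun (i : Fin N) (q : Fin N → ℝ) =>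
            -(1/2) * a i * q i ^ 2 + b i * q i
              + q i * (∑ l, w i l * q l) - φ i * q i)
          i (Function.update (Matrix.mulVec (Matrix.diagonal a - Matrix.of w)⁻¹ (fun i => b i - φ i)) i r)
        ≤
        (fun (i : Fin N) (q : Fin N → ℝ) =>
            -(1/2) * a i * q i ^ 2 + b i * q i
              + q i * (∑ l, w i l * q l) - φ i * q i)
          i (Matrix.mulVec (Matrix.diagonal a - Matrix.of w)⁻¹ (fun i => b i - φ i)))
    ∧
    (∀ q : Fin N → ℝ,
      (∀ (i : Fin N) (r : ℝ),
        (fun (i : Fin N) (q : Fin N → ℝ) =>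
            -(1/2) * a i * q i ^ 2 + b i * q i
              + q i * (∑ l, w i l * q l) - φ i * q i)
          i (Function.update q i r)
        ≤
        (fun (i : Fin N) (q : Fin N → ℝ) =>
            -(1/2) * a i * q i ^ 2 + b i * q i
              + q i * (∑ l, w i l * q l) - φ i * q i)
          i q) →
      q = Matrix.mulVec (Matrix.diagonal a - Matrix.of w)⁻¹ (fun i => b i - φ i)) := by
  set M := diagonal a - of w
  have ha : ∀ i, 0 < a i := fun i => (sum_nonneg fun l _ => hw i l).trans_lt (hdom i)
  have hM : IsUnit M.det := (det_diagonal_sub_ne_zero hw hdom).isUnit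
  have hnash := isNashEquilibrium_consumptionUtility_iff (b := b) (φ := φ) ha hdiag
  refine ⟨(hnash _).2 ?_, fun q hq => ?_⟩
  · rw [mulVec_mulVec, mul_nonsing_inv M hM, one_mulVec]
  · rw [← (hnash q).1 hq, mulVec_mulVec, nonsing_inv_mul M hM, one_mulVec]
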